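/- An infinite word w is ultimately periodic if and only if its initial non-repetitive complexity function inrc_w(n) is bounded. -/
import Mathlib


/-- The set of `m` such that the first `m` length-`n` factors of `x`
are pairwise distinct. -/
def inrcSet {α : Type*} (x : ℕ → α) (n : ℕ) : Set ℕ :=
  {m | ∀ i < m, ∀ j < m, (∀ d < n, x (i + d) = x (j + d)) → i = j}

/-- The initial non-repetitive complexity: the largest `m` such that the
first `m` length-`n` factors of `x` are pairwise distinct. -/
noncomputable def inrc {α : Type*} (x : ℕ → α) (n : ℕ) : ℕ := sSup (inrcSet x n)

lemma inrcSet_bdd {α : Type*} [Fintype α] (x : ℕ → α) (n : ℕ) :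
    ∀ m ∈ inrcSet x n, m ≤ Fintype.card α ^ n := by
  classical
  intro m hm
  by_contra h
  push_neg at h
  have hcard : Fintype.card (Fin n → α) < Fintype.card (Fin (Fintype.card α ^ n + 1)) := by
    simp
  obtain ⟨i, j, hij, hg⟩ := Fintype.exists_ne_map_eq_of_card_lt
    (fun (i : Fin (Fintype.card α ^ n + 1)) (d : Fin n) => x (i + d)) hcard
  refine hij (Fin.ext (hm i (by have := i.isLt; omega) j (by have := j.isLt; omega) ?_))
  intro d hd
  exact congrFun hg ⟨d, hd⟩

/-- an infinite word over a finite alphabet is ultimately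
periodic iff its initial non-repetitive complexity function is bounded. -/
theorem ultimatelyPeriodic_iff_inrc_bounded {α : Type*} [Fintype α] (x : ℕ → α) :
    (∃ p > 0, ∃ N, ∀ i ≥ N, x (i + p) = x i) ↔ ∃ C, ∀ n, inrc x n ≤ C := by
  constructor
  · rintro ⟨p, hp, N, hN⟩
    refine ⟨N + p, fun n => csSup_le' ?_⟩
    intro m hm
    by_contra hc
    push_neg at hc
    have := hm N (by omega) (N + p) (by omega) (fun d _ => by
      have h1 : N + p + d = (N + d) + p := by ring
      rw [h1, hN (N + d) (Nat.le_add_right N d)])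
    omega
  · rintro ⟨C, hC⟩
    have key : ∀ n, ∃ i < C + 1, ∃ j < C + 1,
        (∀ d < n, x (i + d) = x (j + d)) ∧ i ≠ j := by
      intro n
      have hb : BddAbove (inrcSet x n) :=
        ⟨Fintype.card α ^ n, fun m hm => inrcSet_bdd x n m hm⟩
      have hnot : C + 1 ∉ inrcSet x n := by
        intro hmem
        have h2 : C + 1 ≤ inrc x n := le_csSup hb hmem
        have h3 := hC n
        omega
      simp only [inrcSet, Set.mem_setOf_eq] at hnot
      push_neg at hnot
      exact hnot
    choose f hf g hg hfg hne using key
    let F : ℕ → Fin (C + 1) × Fin (C + 1) := fun n => (⟨f n, hf n⟩, ⟨g n, hg n⟩)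
    obtain ⟨⟨a, b⟩, hfib⟩ := Finite.exists_infinite_fiber F
    have hinf : (F ⁻¹' {(a, b)}).Infinite := Set.infinite_coe_iff.mp hfib
    have hmem : ∀ n ∈ F ⁻¹' {(a, b)}, f n = (a : ℕ) ∧ g n = (b : ℕ) := by
      intro n hn
      have hFn : F n = (a, b) := hn
      constructor
      · exact congrArg (fun q => (q.1 : ℕ)) hFn
      · exact congrArg (fun q => (q.2 : ℕ)) hFn
    have hall : ∀ d, x ((a : ℕ) + d) = x ((b : ℕ) + d) := by
      intro d
      obtain ⟨n, hn, hgt⟩ := hinf.exists_gt d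
      obtain ⟨h1, h2⟩ := hmem n hn
      have := hfg n d hgt
      rwa [h1, h2] at this
    have hab : (a : ℕ) ≠ (b : ℕ) := by
      obtain ⟨n, hn⟩ := hinf.nonempty
      obtain ⟨h1, h2⟩ := hmem n hn
      rw [← h1, ← h2]
      exact hne n
    rcases lt_or_gt_of_ne hab with h | h
    · refine ⟨(b : ℕ) - a, by omega, (a : ℕ), fun k hk => ?_⟩
      have h0 := hall (k - a)
      have e1 : (a : ℕ) + (k - a) = k := by omega
      have e2 : (b : ℕ) + (k - a) = k + ((b : ℕ) - a) := by omega
      rw [e1, e2] at h0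
      exact h0.symm
    · refine ⟨(a : ℕ) - b, by omega, (b : ℕ), fun k hk => ?_⟩
      have h0 := hall (k - b)
      have e1 : (b : ℕ) + (k - b) = k := by omega
      have e2 : (a : ℕ) + (k - b) = k + ((a : ℕ) - b) := by omega
      rw [e1, e2] at h0
      exact h0
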